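/- arXiv:2304.08450 — 6 statements merged into one kernel-verified Lean document; each statement's English description precedes it below -/
import Mathlib

section
/- The class C*_CL ∪ {ṽ_CL}, where ṽ_CL is the valuation defined by ṽ_CL(a) = t iff ⊨_CL a (i.e. a is a classical tautology), is a CL-class: it determines exactly the classical consequence relation ⊨_CL. Moreover, ṽ_CL does not belong to C*_CL, so there are at least two distinct CL-classes. -/
/-- Sentences generated from a countably infinite set of atoms by `∧`, `∨`, `¬`. -/
inductive Sentence : Type where
  | atom : ℕ → Sentence
  | conj : Sentence → Sentence → Sentence
  | disj : Sentence → Sentence → Sentence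
  | neg  : Sentence → Sentence

/-- A (bivalent) valuation: `true` = t, `false` = f. -/
abbrev SentVal : Type := Sentence → Bool

/-- The class `C*_CL` of all classical (truth-table) valuations. -/
def CstarCL : Set SentVal :=
  { v | (∀ a b, (v (Sentence.conj a b) = true ↔ (v a = true ∧ v b = true))) ∧
        (∀ a b, (v (Sentence.disj a b) = false ↔ (v a = false ∧ v b = false))) ∧
        (∀ a, (v (Sentence.neg a) = true ↔ v a = false)) }

/-- Classical consequence `Γ ⊨_CL a`. -/
def CLconseq (Γ : Set Sentence) (a : Sentence) : Prop :=
  ∀ v ∈ CstarCL, (∀ γ ∈ Γ, v γ = true) → v a = true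

/-- `⊨_CL a`: `a` is a classical tautology. -/
def CLvalid (a : Sentence) : Prop := ∀ v ∈ CstarCL, v a = true

/-- A CL-class: any class of valuations determining exactly `⊨_CL`. -/
def IsCLClass (C : Set SentVal) : Prop :=
  ∀ (Γ : Set Sentence) (a : Sentence),
    CLconseq Γ a ↔ (∀ v ∈ C, (∀ γ ∈ Γ, v γ = true) → v a = true)

/-- Carnap's non-standard valuation `ṽ_CL`: `ṽ_CL a = t` iff `a` is a classical
tautology. -/
noncomputable def tildeVCL : SentVal :=
  fun a => @decide (CLvalid a) (Classical.propDecidable _)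

/-- Evaluation of a sentence under an atom assignment. -/
def evalS (f : ℕ → Bool) : Sentence → Bool
  | Sentence.atom n => f n
  | Sentence.conj a b => evalS f a && evalS f b
  | Sentence.disj a b => evalS f a || evalS f b
  | Sentence.neg a => !(evalS f a)

lemma evalS_mem (f : ℕ → Bool) : evalS f ∈ CstarCL := by
  refine ⟨fun a b => ?_, fun a b => ?_, fun a => ?_⟩ <;>
    simp [evalS, Bool.and_eq_true, Bool.or_eq_false_iff, Bool.not_eq_true']

lemma tilde_eq_true_iff (a : Sentence) : tildeVCL a = true ↔ CLvalid a := by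
  simp only [tildeVCL, decide_eq_true_eq]

/-- `C*_CL ∪ {ṽ_CL}` is a CL-class, `ṽ_CL ∉ C*_CL`, and hence
there are at least two distinct CL-classes. -/
theorem stmt_1 :
    IsCLClass CstarCL ∧ IsCLClass (CstarCL ∪ {tildeVCL}) ∧
    tildeVCL ∉ CstarCL ∧
    ∃ C₁ C₂ : Set SentVal, IsCLClass C₁ ∧ IsCLClass C₂ ∧ C₁ ≠ C₂ := by
  have h1 : IsCLClass CstarCL := fun Γ a => Iff.rfl
  have h2 : IsCLClass (CstarCL ∪ {tildeVCL}) := by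
    intro Γ a
    constructor
    · intro h v hv hΓ
      rcases hv with hv | hv
      · exact h v hv hΓ
      · -- v = tildeVCL
        rcases hv with rfl
        rw [tilde_eq_true_iff]
        intro w hw
        exact h w hw (fun γ hγ => (tilde_eq_true_iff γ).mp (hΓ γ hγ) w hw)
    · intro h v hv hΓ
      exact h v (Or.inl hv) hΓ
  have hnv : tildeVCL ∉ CstarCL := by
    intro hv
    have hatom : tildeVCL (Sentence.atom 0) = false := by
      rw [Bool.eq_false_iff]
      intro h
      have := (tilde_eq_true_iff _).mp h (evalS (fun _ => false)) (evalS_mem _)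
      simp [evalS] at this
    have hneg : tildeVCL (Sentence.neg (Sentence.atom 0)) = false := by
      rw [Bool.eq_false_iff]
      intro h
      have := (tilde_eq_true_iff _).mp h (evalS (fun _ => true)) (evalS_mem _)
      simp [evalS] at this
    have := (hv.2.2 (Sentence.atom 0)).mpr hatom
    rw [hneg] at this
    exact Bool.false_ne_true this
  refine ⟨h1, h2, hnv, CstarCL, CstarCL ∪ {tildeVCL}, h1, h2, ?_⟩
  intro h
  exact hnv (h ▸ (Or.inr rfl : tildeVCL ∈ CstarCL ∪ {tildeVCL}))
end

section
/- (Malament) Let H be a complex Hilbert space with dim H ≥ 2. No H-class of valuations makes more than one of the connectives ∧, ∨, ¬ truth-functional. In particular, there is no truth-functional H-class (one making all three connectives truth-functional). -/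
/-- An interpretation: a homomorphism of the language into the algebra of
closed subspaces of `H`, with `∧` as intersection, `∨` as closed linear span
and `¬` as orthogonal complement. -/
structure Interp (H : Type*) [NormedAddCommGroup H] [InnerProductSpace ℂ H]
    [CompleteSpace H] : Type _ where
  toFun : Sentence → Submodule ℂ H
  closed : ∀ a, IsClosed (toFun a : Set H)
  map_conj : ∀ a b, toFun (Sentence.conj a b) = toFun a ⊓ toFun b
  map_disj : ∀ a b, toFun (Sentence.disj a b) = (toFun a ⊔ toFun b).topologicalClosure
  map_neg : ∀ a, toFun (Sentence.neg a) = (toFun a)ᗮ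

/-- `CstarH H`: the class of valuations `v^{(i)}_P`, for interpretations `i` and
1-dimensional subspaces `P`, where `v^{(i)}_P a = t` iff `P ⊆ i a`. -/
def CstarH (H : Type*) [NormedAddCommGroup H] [InnerProductSpace ℂ H] [CompleteSpace H] :
    Set SentVal :=
  { v | ∃ (i : Interp H) (P : Submodule ℂ H), Module.finrank ℂ P = 1 ∧
      ∀ a, (v a = true ↔ P ≤ i.toFun a) }

/-- Quantum-logical consequence `Γ ⊨_H a`. -/
def QLconseq (H : Type*) [NormedAddCommGroup H] [InnerProductSpace ℂ H] [CompleteSpace H]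
    (Γ : Set Sentence) (a : Sentence) : Prop :=
  ∀ v ∈ CstarH H, (∀ γ ∈ Γ, v γ = true) → v a = true

/-- An `H`-class: any class of valuations determining exactly `⊨_H`. -/
def IsHClass (H : Type*) [NormedAddCommGroup H] [InnerProductSpace ℂ H] [CompleteSpace H]
    (C : Set SentVal) : Prop :=
  ∀ (Γ : Set Sentence) (a : Sentence),
    QLconseq H Γ a ↔ (∀ v ∈ C, (∀ γ ∈ Γ, v γ = true) → v a = true)

/-- A class of valuations makes a binary connective truth-functional. -/
def MakesBinTF (C : Set SentVal) (op : Sentence → Sentence → Sentence) : Prop :=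
  ∃ f : Bool → Bool → Bool, ∀ v ∈ C, ∀ a b, v (op a b) = f (v a) (v b)

/-- A class of valuations makes negation truth-functional. -/
def MakesNegTF (C : Set SentVal) : Prop :=
  ∃ f : Bool → Bool, ∀ v ∈ C, ∀ a, v (Sentence.neg a) = f (v a)

/- ===================== auxiliary development ===================== -/
noncomputable section MalamentAux

set_option linter.unusedSectionVars false
set_option linter.unusedVariables false

open Sentence Submodule
open scoped InnerProductSpace

variable {H : Type*} [NormedAddCommGroup H] [InnerProductSpace ℂ H] [CompleteSpace H]

/-- Extend an assignment of closed subspaces to atoms to all sentences. -/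
def interpFun (g : ℕ → Submodule ℂ H) : Sentence → Submodule ℂ H
  | atom n => g n
  | conj a b => interpFun g a ⊓ interpFun g b
  | disj a b => (interpFun g a ⊔ interpFun g b).topologicalClosure
  | neg a => (interpFun g a)ᗮ

lemma interpFun_closed (g : ℕ → Submodule ℂ H) (hg : ∀ n, IsClosed (g n : Set H)) :
    ∀ a, IsClosed ((interpFun g a : Submodule ℂ H) : Set H)
  | atom n => hg n
  | conj a b => by
      show IsClosed ((interpFun g a ⊓ interpFun g b : Submodule ℂ H) : Set H)
      rw [Submodule.coe_inf]
      exact (interpFun_closed g hg a).inter (interpFun_closed g hg b)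
  | disj a b => (interpFun g a ⊔ interpFun g b).isClosed_topologicalClosure
  | neg a => Submodule.isClosed_orthogonal _

/-- Build an interpretation from an atom assignment. -/
def mkInterp (g : ℕ → Submodule ℂ H) (hg : ∀ n, IsClosed (g n : Set H)) : Interp H :=
  ⟨interpFun g, interpFun_closed g hg, fun _ _ => rfl, fun _ _ => rfl, fun _ => rfl⟩

/-- The valuation determined by an interpretation and a subspace. -/
def valOf (i : Interp H) (P : Submodule ℂ H) : SentVal :=
  fun a => @decide (P ≤ i.toFun a) (Classical.propDecidable _)

lemma valOf_iff (i : Interp H) (P : Submodule ℂ H) (a : Sentence) :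
    valOf i P a = true ↔ P ≤ i.toFun a := by
  simp [valOf]

lemma valOf_mem (i : Interp H) (P : Submodule ℂ H) (hP : Module.finrank ℂ P = 1) :
    valOf i P ∈ CstarH H :=
  ⟨i, P, hP, valOf_iff i P⟩

/-- A general tool to refute `QLconseq`. -/
lemma not_qlconseq (g : ℕ → Submodule ℂ H) (hg : ∀ n, IsClosed (g n : Set H))
    (P : Submodule ℂ H) (hP : Module.finrank ℂ P = 1) {Γ : Set Sentence} {a : Sentence}
    (hΓ : ∀ γ ∈ Γ, P ≤ interpFun g γ) (ha : ¬ P ≤ interpFun g a) :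
    ¬ QLconseq H Γ a := by
  intro h
  have := h (valOf (mkInterp g hg) P) (valOf_mem _ P hP)
    (fun γ hγ => (valOf_iff _ P γ).mpr (hΓ γ hγ))
  exact ha ((valOf_iff (mkInterp g hg) P a).mp this)

/-- Extract a witness in `C` from a failed consequence. -/
lemma witness {C : Set SentVal} (hC : IsHClass H C) {Γ : Set Sentence} {a : Sentence}
    (h : ¬ QLconseq H Γ a) :
    ∃ v ∈ C, (∀ γ ∈ Γ, v γ = true) ∧ v a = false := by
  rw [hC Γ a] at h
  push_neg at h
  obtain ⟨v, hv, hvΓ, hva⟩ := h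
  exact ⟨v, hv, hvΓ, by simpa using hva⟩

/- ============ positive QL consequences ============ -/

lemma ql_conj_intro (a b : Sentence) : QLconseq H {a, b} (a.conj b) := by
  rintro v ⟨i, P, hP, hv⟩ h
  rw [hv, i.map_conj]
  exact le_inf ((hv a).mp (h a (by simp))) ((hv b).mp (h b (by simp)))

lemma ql_conj_left (a b : Sentence) : QLconseq H {a.conj b} a := by
  rintro v ⟨i, P, hP, hv⟩ h
  have := (hv _).mp (h (a.conj b) (by simp))
  rw [i.map_conj] at this
  exact (hv a).mpr (this.trans inf_le_left)

lemma ql_conj_right (a b : Sentence) : QLconseq H {a.conj b} b := by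
  rintro v ⟨i, P, hP, hv⟩ h
  have := (hv _).mp (h (a.conj b) (by simp))
  rw [i.map_conj] at this
  exact (hv b).mpr (this.trans inf_le_right)

lemma ql_disj_intro_left (a b : Sentence) : QLconseq H {a} (a.disj b) := by
  rintro v ⟨i, P, hP, hv⟩ h
  have := (hv a).mp (h a (by simp))
  rw [hv, i.map_disj]
  exact this.trans (le_sup_left.trans (le_topologicalClosure _))

lemma ql_disj_intro_right (a b : Sentence) : QLconseq H {b} (a.disj b) := by
  rintro v ⟨i, P, hP, hv⟩ h
  have := (hv b).mp (h b (by simp))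
  rw [hv, i.map_disj]
  exact this.trans (le_sup_right.trans (le_topologicalClosure _))

lemma ql_lem (a : Sentence) : QLconseq H ∅ (a.disj a.neg) := by
  rintro v ⟨i, P, hP, hv⟩ _
  rw [hv, i.map_disj, i.map_neg]
  have : CompleteSpace (i.toFun a) := (i.closed a).completeSpace_coe
  have htop : i.toFun a ⊔ (i.toFun a)ᗮ = ⊤ := Submodule.sup_orthogonal_of_hasOrthogonalProjection
  rw [htop]
  exact le_trans le_top (le_topologicalClosure _)

lemma ql_explosion (a b : Sentence) : QLconseq H {a, a.neg} b := by
  rintro v ⟨i, P, hP, hv⟩ h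
  have h1 := (hv a).mp (h a (by simp))
  have h2 := (hv a.neg).mp (h a.neg (by simp))
  rw [i.map_neg] at h2
  have hb : P ≤ ⊥ := by
    rw [← (Submodule.orthogonal_disjoint (i.toFun a)).eq_bot]
    exact le_inf h1 h2
  rw [le_bot_iff] at hb
  rw [hb, finrank_bot] at hP
  exact absurd hP (by norm_num)

/- ============ linear-algebra facts ============ -/

lemma exists_ortho_pair (hdim : 2 ≤ Module.rank ℂ H) :
    ∃ u w : H, u ≠ 0 ∧ w ≠ 0 ∧ ⟪u, w⟫_ℂ = 0 := by
  have : Nontrivial H := by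
    rw [← rank_pos_iff_nontrivial (R := ℂ)]
    exact lt_of_lt_of_le (by norm_num) hdim
  obtain ⟨u, hu⟩ := exists_ne (0 : H)
  set K := Submodule.span ℂ ({u} : Set H) with hK
  have hfin : FiniteDimensional ℂ K := by
    apply FiniteDimensional.span_of_finite
    exact Set.finite_singleton u
  have hKc : CompleteSpace K := FiniteDimensional.complete ℂ K
  by_cases hbot : Kᗮ = ⊥
  · exfalso
    have htop : K = ⊤ := by
      have h2 := K.orthogonal_orthogonal
      rw [hbot] at h2
      rw [← h2, Submodule.bot_orthogonal_eq_top]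
    have h1 : Module.rank ℂ K ≤ 1 := by
      have := rank_span_le (R := ℂ) ({u} : Set H)
      simpa using this
    rw [htop, rank_top ℂ H] at h1
    exact absurd (hdim.trans h1) (by norm_num)
  · obtain ⟨w, hwK, hw⟩ := Submodule.exists_mem_ne_zero_of_ne_bot hbot
    exact ⟨u, w, hu, hw, hwK u (Submodule.mem_span_singleton_self u)⟩

lemma eq_zero_of_spans {z x y : H} (hx : x ∈ Submodule.span ℂ ({y} : Set H))
    (hzx : ⟪z, x⟫_ℂ = 0) (hzy : ⟪z, y⟫_ℂ ≠ 0) : x = 0 := by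
  obtain ⟨c, rfl⟩ := Submodule.mem_span_singleton.mp hx
  rw [inner_smul_right] at hzx
  rcases mul_eq_zero.mp hzx with h | h
  · simp [h]
  · exact absurd h hzy

lemma inner_zero_of_span {z x y : H} (hx : x ∈ Submodule.span ℂ ({y} : Set H))
    (hzy : ⟪z, y⟫_ℂ = 0) : ⟪z, x⟫_ℂ = 0 := by
  obtain ⟨c, rfl⟩ := Submodule.mem_span_singleton.mp hx
  rw [inner_smul_right, hzy, mul_zero]

lemma inner_wu {u w : H} (huw : ⟪u, w⟫_ℂ = 0) : ⟪w, u⟫_ℂ = 0 := by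
  rw [← inner_conj_symm, huw, map_zero]

lemma inner_u_usum {u w : H} (hu : u ≠ 0) (huw : ⟪u, w⟫_ℂ = 0) : ⟪u, u + w⟫_ℂ ≠ 0 := by
  rw [inner_add_right, huw, add_zero]; simpa using hu

lemma inner_w_usum {u w : H} (hw : w ≠ 0) (huw : ⟪u, w⟫_ℂ = 0) : ⟪w, u + w⟫_ℂ ≠ 0 := by
  rw [inner_add_right, inner_wu huw, zero_add]; simpa using hw

lemma inner_usum_u {u w : H} (hu : u ≠ 0) (huw : ⟪u, w⟫_ℂ = 0) : ⟪u + w, u⟫_ℂ ≠ 0 := by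
  rw [inner_add_left, inner_wu huw, add_zero]
  intro h
  exact hu (inner_self_eq_zero.mp h)

lemma span_inf_bot_1 {u w : H} (hw : w ≠ 0) (huw : ⟪u, w⟫_ℂ = 0) :
    Submodule.span ℂ ({u} : Set H) ⊓ Submodule.span ℂ ({u + w} : Set H) = ⊥ := by
  rw [eq_bot_iff]
  rintro x hx
  obtain ⟨h1, h2⟩ := Submodule.mem_inf.mp hx
  have hwx : ⟪w, x⟫_ℂ = 0 := inner_zero_of_span h1 (inner_wu huw)
  exact (Submodule.mem_bot ℂ).mpr (eq_zero_of_spans h2 hwx (inner_w_usum hw huw))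

lemma span_inf_bot_2 {u w : H} (hu : u ≠ 0) (huw : ⟪u, w⟫_ℂ = 0) :
    Submodule.span ℂ ({w} : Set H) ⊓ Submodule.span ℂ ({u} : Set H) = ⊥ := by
  rw [eq_bot_iff]
  rintro x hx
  obtain ⟨h1, h2⟩ := Submodule.mem_inf.mp hx
  have : ⟪u, x⟫_ℂ = 0 := inner_zero_of_span h1 huw
  exact (Submodule.mem_bot ℂ).mpr (eq_zero_of_spans h2 this (by simpa using hu))

lemma span_inf_bot_3 {u w : H} (hu : u ≠ 0) (huw : ⟪u, w⟫_ℂ = 0) :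
    Submodule.span ℂ ({w} : Set H) ⊓ Submodule.span ℂ ({u + w} : Set H) = ⊥ := by
  rw [eq_bot_iff]
  rintro x hx
  obtain ⟨h1, h2⟩ := Submodule.mem_inf.mp hx
  have : ⟪u, x⟫_ℂ = 0 := inner_zero_of_span h1 huw
  exact (Submodule.mem_bot ℂ).mpr (eq_zero_of_spans h2 this (inner_u_usum hu huw))

lemma span_inf_orth_bot {u w : H} (hu : u ≠ 0) (huw : ⟪u, w⟫_ℂ = 0) :
    Submodule.span ℂ ({u} : Set H) ⊓ (Submodule.span ℂ ({u + w} : Set H))ᗮ = ⊥ := by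
  rw [eq_bot_iff]
  rintro x hx
  obtain ⟨h1, h2⟩ := Submodule.mem_inf.mp hx
  have hx2 : ⟪u + w, x⟫_ℂ = 0 := h2 (u + w) (Submodule.mem_span_singleton_self _)
  exact (Submodule.mem_bot ℂ).mpr (eq_zero_of_spans h1 hx2 (inner_usum_u hu huw))

lemma span_le_orth {u w : H} (huw : ⟪u, w⟫_ℂ = 0) :
    Submodule.span ℂ ({w} : Set H) ≤ (Submodule.span ℂ ({u} : Set H))ᗮ := by
  rw [Submodule.span_le, Set.singleton_subset_iff]
  intro y hy
  have h0 : ⟪w, y⟫_ℂ = 0 := inner_zero_of_span hy (inner_wu huw)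
  rw [← inner_conj_symm, h0, map_zero]

lemma not_span_le_orth_self {u : H} (hu : u ≠ 0) :
    ¬ Submodule.span ℂ ({u} : Set H) ≤ (Submodule.span ℂ ({u} : Set H))ᗮ := by
  intro h
  have := h (Submodule.mem_span_singleton_self u) u (Submodule.mem_span_singleton_self u)
  exact hu (inner_self_eq_zero.mp this)

lemma w_mem_sup {u w : H} :
    w ∈ Submodule.span ℂ ({u} : Set H) ⊔ Submodule.span ℂ ({u + w} : Set H) := by
  have h1 : u ∈ Submodule.span ℂ ({u} : Set H) ⊔ Submodule.span ℂ ({u + w} : Set H) :=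
    Submodule.mem_sup_left (Submodule.mem_span_singleton_self u)
  have h2 : u + w ∈ Submodule.span ℂ ({u} : Set H) ⊔ Submodule.span ℂ ({u + w} : Set H) :=
    Submodule.mem_sup_right (Submodule.mem_span_singleton_self _)
  simpa using Submodule.sub_mem _ h2 h1

lemma not_span_le_bot {u : H} (hu : u ≠ 0) : ¬ Submodule.span ℂ ({u} : Set H) ≤ ⊥ := by
  intro h
  exact hu ((Submodule.mem_bot ℂ).mp (h (Submodule.mem_span_singleton_self u)))

lemma isClosed_top' : IsClosed ((⊤ : Submodule ℂ H) : Set H) := by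
  rw [Submodule.top_coe]; exact isClosed_univ

lemma isClosed_bot' : IsClosed ((⊥ : Submodule ℂ H) : Set H) := by
  rw [Submodule.bot_coe]; exact isClosed_singleton

lemma isClosed_span' (x : H) : IsClosed ((Submodule.span ℂ ({x} : Set H)) : Set H) := by
  have : FiniteDimensional ℂ (Submodule.span ℂ ({x} : Set H)) :=
    FiniteDimensional.span_of_finite ℂ (Set.finite_singleton x)
  exact (Submodule.span ℂ ({x} : Set H)).closed_of_finiteDimensional

lemma topClosure_bot : (⊥ : Submodule ℂ H).topologicalClosure = ⊥ :=
  le_bot_iff.mp (Submodule.topologicalClosure_minimal _ le_rfl isClosed_bot')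

/- ============ non-consequences ============ -/

section NotQL

variable {u w : H} (hu : u ≠ 0) (hw : w ≠ 0) (huw : ⟪u, w⟫_ℂ = 0)

local notation "p" => Sentence.atom 0
local notation "q" => Sentence.atom 1
local notation "r" => Sentence.atom 2

include hu in
lemma nql_1 : ¬ QLconseq H {p} q := by
  apply not_qlconseq (fun n => match n with | 0 => ⊤ | _ => ⊥)
    (fun n => by rcases n with _ | n
                 · exact isClosed_top'
                 · exact isClosed_bot')
    (Submodule.span ℂ ({u} : Set H)) (finrank_span_singleton hu)
  · rintro γ hγ
    rw [Set.eq_of_mem_singleton hγ]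
    exact le_top
  · exact not_span_le_bot hu

include hu in
lemma nql_1' : ¬ QLconseq H {q} p := by
  apply not_qlconseq (fun n => match n with | 0 => ⊥ | 1 => ⊤ | _ => ⊥)
    (fun n => by rcases n with _ | _ | n
                 · exact isClosed_bot'
                 · exact isClosed_top'
                 · exact isClosed_bot')
    (Submodule.span ℂ ({u} : Set H)) (finrank_span_singleton hu)
  · rintro γ hγ
    rw [Set.eq_of_mem_singleton hγ]
    exact le_top
  · exact not_span_le_bot hu

include hu in
lemma nql_2 : ¬ QLconseq H {p, q} r := by
  apply not_qlconseq (fun n => match n with | 0 => ⊤ | 1 => ⊤ | _ => ⊥)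
    (fun n => by rcases n with _ | _ | n
                 · exact isClosed_top'
                 · exact isClosed_top'
                 · exact isClosed_bot')
    (Submodule.span ℂ ({u} : Set H)) (finrank_span_singleton hu)
  · rintro γ hγ
    rcases hγ with rfl | hγ
    · exact le_top
    · rw [Set.eq_of_mem_singleton hγ]
      exact le_top
  · exact not_span_le_bot hu

include hu in
lemma nql_3 : ¬ QLconseq H ∅ (Sentence.disj p q) := by
  apply not_qlconseq (fun _ => ⊥) (fun n => isClosed_bot')
    (Submodule.span ℂ ({u} : Set H)) (finrank_span_singleton hu)
  · rintro γ hγ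
    exact absurd hγ (Set.notMem_empty γ)
  · show ¬ _ ≤ ((⊥ : Submodule ℂ H) ⊔ ⊥).topologicalClosure
    rw [sup_bot_eq, topClosure_bot]
    exact not_span_le_bot hu

include hu in
lemma nql_4 : ¬ QLconseq H {Sentence.neg p} q := by
  apply not_qlconseq (fun _ => ⊥) (fun n => isClosed_bot')
    (Submodule.span ℂ ({u} : Set H)) (finrank_span_singleton hu)
  · rintro γ hγ
    rw [Set.eq_of_mem_singleton hγ]
    show _ ≤ ((⊥ : Submodule ℂ H))ᗮ
    rw [Submodule.bot_orthogonal_eq_top]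
    exact le_top
  · exact not_span_le_bot hu

include hu hw huw in
lemma nql_5 : ¬ QLconseq H {Sentence.neg (Sentence.conj p q),
    Sentence.neg (Sentence.conj p (Sentence.neg q))} (Sentence.neg p) := by
  apply not_qlconseq
    (fun n => match n with
      | 0 => Submodule.span ℂ ({u} : Set H)
      | 1 => Submodule.span ℂ ({u + w} : Set H)
      | _ => ⊥)
    (fun n => by rcases n with _ | _ | n
                 · exact isClosed_span' u
                 · exact isClosed_span' (u + w)
                 · exact isClosed_bot')
    (Submodule.span ℂ ({u} : Set H)) (finrank_span_singleton hu)
  · rintro γ hγ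
    rcases hγ with rfl | hγ
    · show _ ≤ (Submodule.span ℂ ({u} : Set H) ⊓ Submodule.span ℂ ({u + w} : Set H))ᗮ
      rw [span_inf_bot_1 hw huw, Submodule.bot_orthogonal_eq_top]
      exact le_top
    · rw [Set.eq_of_mem_singleton hγ]
      show _ ≤ (Submodule.span ℂ ({u} : Set H) ⊓ (Submodule.span ℂ ({u + w} : Set H))ᗮ)ᗮ
      rw [span_inf_orth_bot hu huw, Submodule.bot_orthogonal_eq_top]
      exact le_top
  · exact not_span_le_orth_self hu

include hu hw huw in
lemma nql_6 : ¬ QLconseq H {Sentence.disj p q, Sentence.neg p} q := by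
  apply not_qlconseq
    (fun n => match n with
      | 0 => Submodule.span ℂ ({u} : Set H)
      | 1 => Submodule.span ℂ ({u + w} : Set H)
      | _ => ⊥)
    (fun n => by rcases n with _ | _ | n
                 · exact isClosed_span' u
                 · exact isClosed_span' (u + w)
                 · exact isClosed_bot')
    (Submodule.span ℂ ({w} : Set H)) (finrank_span_singleton hw)
  · rintro γ hγ
    rcases hγ with rfl | hγ
    · show _ ≤ (Submodule.span ℂ ({u} : Set H) ⊔
        Submodule.span ℂ ({u + w} : Set H)).topologicalClosure
      refine le_trans ?_ (Submodule.le_topologicalClosure _)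
      rw [Submodule.span_le, Set.singleton_subset_iff]
      exact w_mem_sup
    · rw [Set.eq_of_mem_singleton hγ]
      exact span_le_orth huw
  · intro h
    have hmem : w ∈ Submodule.span ℂ ({u + w} : Set H) :=
      h (Submodule.mem_span_singleton_self w)
    exact hw (eq_zero_of_spans hmem huw (inner_u_usum hu huw))

include hu hw huw in
lemma nql_7 : ¬ QLconseq H {Sentence.conj p (Sentence.disj q r)}
    (Sentence.disj (Sentence.conj p q) (Sentence.conj p r)) := by
  apply not_qlconseq
    (fun n => match n with
      | 0 => Submodule.span ℂ ({w} : Set H)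
      | 1 => Submodule.span ℂ ({u} : Set H)
      | 2 => Submodule.span ℂ ({u + w} : Set H)
      | _ => ⊥)
    (fun n => by rcases n with _ | _ | _ | n
                 · exact isClosed_span' w
                 · exact isClosed_span' u
                 · exact isClosed_span' (u + w)
                 · exact isClosed_bot')
    (Submodule.span ℂ ({w} : Set H)) (finrank_span_singleton hw)
  · rintro γ hγ
    rw [Set.eq_of_mem_singleton hγ]
    show _ ≤ Submodule.span ℂ ({w} : Set H) ⊓
      (Submodule.span ℂ ({u} : Set H) ⊔ Submodule.span ℂ ({u + w} : Set H)).topologicalClosure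
    refine le_inf le_rfl (le_trans ?_ (Submodule.le_topologicalClosure _))
    rw [Submodule.span_le, Set.singleton_subset_iff]
    exact w_mem_sup
  · show ¬ _ ≤ ((Submodule.span ℂ ({w} : Set H) ⊓ Submodule.span ℂ ({u} : Set H)) ⊔
      (Submodule.span ℂ ({w} : Set H) ⊓ Submodule.span ℂ ({u + w} : Set H))).topologicalClosure
    rw [span_inf_bot_2 hu huw, span_inf_bot_3 hu huw, sup_bot_eq, topClosure_bot]
    exact not_span_le_bot hw

end NotQL

lemma bool_contra {x y : Bool} (h : x = true → y = true) (hy : y = false) : x = false := by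
  cases hx : x
  · rfl
  · rw [h hx] at hy; cases hy

end MalamentAux

/-- Malament: for `dim H ≥ 2`, no `H`-class makes more than one
of the connectives `∧`, `∨`, `¬` truth-functional; in particular there is no
truth-functional `H`-class. -/
theorem stmt_4 (H : Type*) [NormedAddCommGroup H] [InnerProductSpace ℂ H]
    [CompleteSpace H] (hdim : 2 ≤ Module.rank ℂ H) :
    ∀ C : Set SentVal, IsHClass H C →
      ¬ (MakesBinTF C Sentence.conj ∧ MakesBinTF C Sentence.disj) ∧
      ¬ (MakesBinTF C Sentence.conj ∧ MakesNegTF C) ∧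
      ¬ (MakesBinTF C Sentence.disj ∧ MakesNegTF C) ∧
      ¬ (MakesBinTF C Sentence.conj ∧ MakesBinTF C Sentence.disj ∧ MakesNegTF C) := by
  intro C hC
  obtain ⟨u, w, hu, hw, huw⟩ := exists_ortho_pair hdim
  set p := Sentence.atom 0 with hp
  set q := Sentence.atom 1 with hq
  set r := Sentence.atom 2 with hr
  -- transfer of positive consequences to C
  have Tconj_intro : ∀ (a b : Sentence) (v) (_ : v ∈ C),
      v a = true → v b = true → v (a.conj b) = true := by
    intro a b v hv ha hb
    refine (hC _ _).mp (ql_conj_intro a b) v hv ?_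
    rintro γ (rfl | hγ)
    · exact ha
    · rw [Set.eq_of_mem_singleton hγ]; exact hb
  have Tconj_left : ∀ (a b : Sentence) (v) (_ : v ∈ C),
      v (a.conj b) = true → v a = true := by
    intro a b v hv h
    exact (hC _ _).mp (ql_conj_left a b) v hv
      (fun γ hγ => by rw [Set.eq_of_mem_singleton hγ]; exact h)
  have Tconj_right : ∀ (a b : Sentence) (v) (_ : v ∈ C),
      v (a.conj b) = true → v b = true := by
    intro a b v hv h
    exact (hC _ _).mp (ql_conj_right a b) v hv
      (fun γ hγ => by rw [Set.eq_of_mem_singleton hγ]; exact h)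
  have Tdisj_left : ∀ (a b : Sentence) (v) (_ : v ∈ C),
      v a = true → v (a.disj b) = true := by
    intro a b v hv h
    exact (hC _ _).mp (ql_disj_intro_left a b) v hv
      (fun γ hγ => by rw [Set.eq_of_mem_singleton hγ]; exact h)
  have Tdisj_right : ∀ (a b : Sentence) (v) (_ : v ∈ C),
      v b = true → v (a.disj b) = true := by
    intro a b v hv h
    exact (hC _ _).mp (ql_disj_intro_right a b) v hv
      (fun γ hγ => by rw [Set.eq_of_mem_singleton hγ]; exact h)
  have Tlem : ∀ (a : Sentence) (v) (_ : v ∈ C), v (a.disj a.neg) = true := by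
    intro a v hv
    exact (hC _ _).mp (ql_lem a) v hv (fun γ hγ => absurd hγ (Set.notMem_empty γ))
  have Texpl : ∀ (a b : Sentence) (v) (_ : v ∈ C),
      v a = true → v a.neg = true → v b = true := by
    intro a b v hv ha hna
    refine (hC _ _).mp (ql_explosion a b) v hv ?_
    rintro γ (rfl | hγ)
    · exact ha
    · rw [Set.eq_of_mem_singleton hγ]; exact hna
  -- witnesses in C
  obtain ⟨v1, hv1C, hv1Γ, hv1q⟩ := witness hC (nql_1 (H := H) hu)
  have hv1p : v1 p = true := hv1Γ p rfl
  obtain ⟨v2, hv2C, hv2Γ, hv2p⟩ := witness hC (nql_1' (H := H) hu)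
  have hv2q : v2 q = true := hv2Γ q rfl
  obtain ⟨v3, hv3C, hv3Γ, _⟩ := witness hC (nql_2 (H := H) hu)
  have hv3p : v3 p = true := hv3Γ p (Or.inl rfl)
  have hv3q : v3 q = true := hv3Γ q (Or.inr rfl)
  obtain ⟨v4, hv4C, _, hv4pq⟩ := witness hC (nql_3 (H := H) hu)
  have hv4p : v4 p = false := bool_contra (Tdisj_left p q v4 hv4C) hv4pq
  have hv4q : v4 q = false := bool_contra (Tdisj_right p q v4 hv4C) hv4pq
  -- determination of truth functions
  have conj_eq : ∀ (fc : Bool → Bool → Bool),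
      (∀ v ∈ C, ∀ a b, v (Sentence.conj a b) = fc (v a) (v b)) →
      ∀ x y, fc x y = (x && y) := by
    intro fc hfc x y
    cases x <;> cases y
    · have h1 : v4 (p.conj q) = false := bool_contra (Tconj_left p q v4 hv4C) hv4p
      rw [hfc v4 hv4C p q, hv4p, hv4q] at h1
      exact h1
    · have h1 : v2 (p.conj q) = false := bool_contra (Tconj_left p q v2 hv2C) hv2p
      rw [hfc v2 hv2C p q, hv2p, hv2q] at h1
      exact h1
    · have h1 : v1 (p.conj q) = false := bool_contra (Tconj_right p q v1 hv1C) hv1q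
      rw [hfc v1 hv1C p q, hv1p, hv1q] at h1
      exact h1
    · have h1 : v3 (p.conj q) = true := Tconj_intro p q v3 hv3C hv3p hv3q
      rw [hfc v3 hv3C p q, hv3p, hv3q] at h1
      exact h1
  have disj_eq : ∀ (fd : Bool → Bool → Bool),
      (∀ v ∈ C, ∀ a b, v (Sentence.disj a b) = fd (v a) (v b)) →
      ∀ x y, fd x y = (x || y) := by
    intro fd hfd x y
    cases x <;> cases y
    · have h1 := hv4pq
      rw [hfd v4 hv4C p q, hv4p, hv4q] at h1
      exact h1
    · have h1 : v2 (p.disj q) = true := Tdisj_right p q v2 hv2C hv2q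
      rw [hfd v2 hv2C p q, hv2p, hv2q] at h1
      exact h1
    · have h1 : v1 (p.disj q) = true := Tdisj_left p q v1 hv1C hv1p
      rw [hfd v1 hv1C p q, hv1p, hv1q] at h1
      exact h1
    · have h1 : v3 (p.disj q) = true := Tdisj_left p q v3 hv3C hv3p
      rw [hfd v3 hv3C p q, hv3p, hv3q] at h1
      exact h1
  have neg_true : ∀ (fn : Bool → Bool),
      (∀ v ∈ C, ∀ a, v (Sentence.neg a) = fn (v a)) → fn true = false := by
    intro fn hfn
    have h1 : v1 p.neg = false :=
      bool_contra (fun hnp => Texpl p q v1 hv1C hv1p hnp) hv1q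
    rw [hfn v1 hv1C p, hv1p] at h1
    exact h1
  -- the three impossibility results
  have keyCN : ¬ (MakesBinTF C Sentence.conj ∧ MakesNegTF C) := by
    rintro ⟨⟨fc, hfc⟩, ⟨fn, hfn⟩⟩
    have hfc' := conj_eq fc hfc
    have hfnT := neg_true fn hfn
    cases hfnF : fn false
    · -- then v (neg a) is always false; contradicts nql_4 witness
      obtain ⟨v5, hv5C, hv5Γ, _⟩ := witness hC (nql_4 (H := H) hu)
      have hv5 : v5 p.neg = true := hv5Γ p.neg rfl
      rw [hfn v5 hv5C p] at hv5
      cases h5 : v5 p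
      · rw [h5, hfnF] at hv5; cases hv5
      · rw [h5, hfnT] at hv5; cases hv5
    · -- fn = classical not; contradicts nql_5 witness
      obtain ⟨v6, hv6C, hv6Γ, hv6np⟩ := witness hC
        (nql_5 (H := H) hu hw huw)
      have h61 : v6 (Sentence.neg (Sentence.conj p q)) = true :=
        hv6Γ _ (Or.inl rfl)
      have h62 : v6 (Sentence.neg (Sentence.conj p (Sentence.neg q))) = true :=
        hv6Γ _ (Or.inr rfl)
      -- v6 p = true
      have h6p : v6 p = true := by
        cases h : v6 p
        · rw [hfn v6 hv6C p, h, hfnF] at hv6np; cases hv6np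
        · rfl
      -- v6 (p ∧ q) = false
      have h6pq : v6 (Sentence.conj p q) = false := by
        cases h : v6 (Sentence.conj p q)
        · rfl
        · rw [hfn v6 hv6C (Sentence.conj p q), h, hfnT] at h61; cases h61
      -- hence v6 q = false
      have h6q : v6 q = false := by
        rw [hfc v6 hv6C p q, hfc' _ _, h6p] at h6pq
        simpa using h6pq
      -- v6 (p ∧ ¬q) = false, hence v6 (¬q) = false
      have h6pnq : v6 (Sentence.conj p (Sentence.neg q)) = false := by
        cases h : v6 (Sentence.conj p (Sentence.neg q))
        · rfl
        · rw [hfn v6 hv6C (Sentence.conj p (Sentence.neg q)), h, hfnT] at h62; cases h62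
      have h6nq : v6 (Sentence.neg q) = false := by
        rw [hfc v6 hv6C p (Sentence.neg q), hfc' _ _, h6p] at h6pnq
        simpa using h6pnq
      -- but v6 (¬q) = fn (v6 q) = fn false = true
      rw [hfn v6 hv6C q, h6q, hfnF] at h6nq
      cases h6nq
  have keyDN : ¬ (MakesBinTF C Sentence.disj ∧ MakesNegTF C) := by
    rintro ⟨⟨fd, hfd⟩, ⟨fn, hfn⟩⟩
    have hfd' := disj_eq fd hfd
    have hfnT := neg_true fn hfn
    -- fn false = true, from v4 and excluded middle
    have hfnF : fn false = true := by
      have h1 : v4 (p.disj p.neg) = true := Tlem p v4 hv4C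
      rw [hfd v4 hv4C p p.neg, hfd' _ _, hv4p, hfn v4 hv4C p, hv4p] at h1
      simpa using h1
    -- nql_6 witness
    obtain ⟨v7, hv7C, hv7Γ, hv7q⟩ := witness hC (nql_6 (H := H) hu hw huw)
    have h71 : v7 (Sentence.disj p q) = true := hv7Γ _ (Or.inl rfl)
    have h72 : v7 (Sentence.neg p) = true := hv7Γ _ (Or.inr rfl)
    have h7p : v7 p = false := by
      cases h : v7 p
      · rfl
      · rw [hfn v7 hv7C p, h, hfnT] at h72; cases h72
    rw [hfd v7 hv7C p q, hfd' _ _, h7p, hv7q] at h71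
    cases h71
  have keyCD : ¬ (MakesBinTF C Sentence.conj ∧ MakesBinTF C Sentence.disj) := by
    rintro ⟨⟨fc, hfc⟩, ⟨fd, hfd⟩⟩
    have hfc' := conj_eq fc hfc
    have hfd' := disj_eq fd hfd
    obtain ⟨v8, hv8C, hv8Γ, hv8b⟩ := witness hC (nql_7 (H := H) hu hw huw)
    have h81 : v8 (Sentence.conj p (Sentence.disj q r)) = true := hv8Γ _ rfl
    rw [hfc v8 hv8C p (Sentence.disj q r), hfc' _ _,
      hfd v8 hv8C q r, hfd' _ _] at h81
    rw [hfd v8 hv8C (Sentence.conj p q) (Sentence.conj p r), hfd' _ _,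
      hfc v8 hv8C p q, hfc' _ _, hfc v8 hv8C p r, hfc' _ _] at hv8b
    cases h8p : v8 p <;> cases h8q : v8 q <;> cases h8r : v8 r <;>
        rw [h8p, h8q, h8r] at h81 hv8b <;>
      simp at h81 hv8b
  exact ⟨keyCD, keyCN, keyDN, fun h => keyCD ⟨h.1, h.2.1⟩⟩
end

section
/- Let H be a complex Hilbert space with dim H ≥ 2. Every H-class of valuations is also an H-klass, but not vice versa: there exists an H-klass that is not an H-class. -/
/-- The conjunction of the members of a nonempty finite list of sentences
(the value on `[]` is an irrelevant dummy). -/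
def conjList : List Sentence → Sentence
  | [] => Sentence.atom 0
  | [a] => a
  | a :: b :: l => Sentence.conj a (conjList (b :: l))

/-- An `H`-klass: for finite nonempty premise sets, validity is explicated via
the truth of the conjunction of the premises. -/
def IsHKlass (H : Type*) [NormedAddCommGroup H] [InnerProductSpace ℂ H] [CompleteSpace H]
    (K : Set SentVal) : Prop :=
  ∀ (Γ : List Sentence), Γ ≠ [] → ∀ a : Sentence,
    (QLconseq H {γ | γ ∈ Γ} a ↔ (∀ v ∈ K, v (conjList Γ) = true → v a = true))


theorem conjList_true {H : Type*} [NormedAddCommGroup H] [InnerProductSpace ℂ H]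
    [CompleteSpace H] (i : Interp H) (P : Submodule ℂ H) (v : SentVal)
    (hv : ∀ a, v a = true ↔ P ≤ i.toFun a) :
    ∀ Γ : List Sentence, Γ ≠ [] →
      (v (conjList Γ) = true ↔ ∀ γ ∈ Γ, v γ = true)
  | [], h => absurd rfl h
  | [a], _ => by simp [conjList]
  | a :: b :: l, _ => by
      have ih := conjList_true i P v hv (b :: l) (by simp)
      show v (Sentence.conj a (conjList (b :: l))) = true ↔ _
      rw [hv, i.map_conj, le_inf_iff, ← hv, ← hv, ih]
      simp

/-- for `dim H ≥ 2`, every `H`-class is an `H`-klass, but there is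
an `H`-klass that is not an `H`-class. -/
theorem stmt_9 (H : Type*) [NormedAddCommGroup H] [InnerProductSpace ℂ H]
    [CompleteSpace H] (hdim : 2 ≤ Module.rank ℂ H) :
    (∀ C : Set SentVal, IsHClass H C → IsHKlass H C) ∧
    ∃ K : Set SentVal, IsHKlass H K ∧ ¬ IsHClass H K := by
  constructor
  · intro C hC Γ hΓ a
    have key : ∀ v ∈ CstarH H, (v (conjList Γ) = true ↔ ∀ γ ∈ Γ, v γ = true) := by
      rintro v ⟨i, P, _, hv⟩
      exact conjList_true i P v hv Γ hΓ
    constructor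
    · intro hq
      have hq' : QLconseq H {conjList Γ} a := by
        intro v hv hprem
        exact hq v hv (fun γ hγ => ((key v hv).1 (hprem _ rfl)) γ hγ)
      have h2 := (hC {conjList Γ} a).1 hq'
      intro v hvC hc
      refine h2 v hvC ?_
      intro γ hγ
      rw [Set.mem_singleton_iff] at hγ
      subst hγ; exact hc
    · intro hrhs
      have h2 : QLconseq H {conjList Γ} a :=
        (hC {conjList Γ} a).2 (fun v hv hp => hrhs v hv (hp _ rfl))
      intro v hv hprem
      refine h2 v hv ?_
      intro γ hγ
      rw [Set.mem_singleton_iff] at hγ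
      subst hγ
      exact (key v hv).2 (fun γ hγ => hprem γ hγ)
  · refine ⟨CstarH H ∪ {fun _ => false}, ?_, ?_⟩
    · intro Γ hΓ a
      constructor
      · intro hq v hv hc
        rcases hv with hv | hv
        · obtain ⟨i, P, _, hiv⟩ := hv
          exact hq v ⟨i, P, ‹_›, hiv⟩ ((conjList_true i P v hiv Γ hΓ).1 hc)
        · rw [Set.mem_singleton_iff] at hv
          subst hv; simp at hc
      · intro hrhs v hv hprem
        obtain ⟨i, P, h1, hiv⟩ := hv
        exact hrhs v (Or.inl ⟨i, P, h1, hiv⟩)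
          ((conjList_true i P v hiv Γ hΓ).2 (fun γ hγ => hprem γ hγ))
    · intro hC
      have taut : QLconseq H ∅
          (Sentence.disj (Sentence.atom 0) (Sentence.neg (Sentence.atom 0))) := by
        rintro v ⟨i, P, _, hv⟩ _
        rw [hv, i.map_disj, i.map_neg]
        have hcl : IsClosed (i.toFun (Sentence.atom 0) : Set H) := i.closed _
        haveI : CompleteSpace (i.toFun (Sentence.atom 0)) := hcl.completeSpace_coe
        rw [Submodule.sup_orthogonal_of_hasOrthogonalProjection]
        exact le_trans le_top (Submodule.le_topologicalClosure ⊤)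
      have hbad := (hC ∅ _).1 taut (fun _ => false) (Or.inr rfl) (by simp)
      simp at hbad
end

section
/- Let H be a complex Hilbert space with dim H ≥ 2. For each closed subspace P of H with P ≠ {0} and P ≠ H, define h_P : C(H) → {t, f} by h_P(Q) = f iff Q ⊆ P. Then the class 𝓒^{(∨)}_H = { h_P ∘ i : i an interpretation, P ∈ C(H) \ {{0}, H} } is an H-klass: for all finite nonempty Γ ⊆ S and a ∈ S, Γ ⊨_H a iff every v ∈ 𝓒^{(∨)}_H with v(⋀_{γ∈Γ} γ) = t has v(a) = t. -/
/-- The class `𝓒^{(∨)}_H` of valuations `h_P ∘ i`, where `h_P Q = f` iff `Q ⊆ P`,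
for `P` a closed subspace of `H` other than `{0}` and `H`. -/
def Cvee (H : Type*) [NormedAddCommGroup H] [InnerProductSpace ℂ H] [CompleteSpace H] :
    Set SentVal :=
  { v | ∃ (i : Interp H) (P : Submodule ℂ H), IsClosed (P : Set H) ∧ P ≠ ⊥ ∧ P ≠ ⊤ ∧
      ∀ a, (v a = false ↔ i.toFun a ≤ P) }

lemma le_conjList {H : Type*} [NormedAddCommGroup H] [InnerProductSpace ℂ H] [CompleteSpace H]
    (i : Interp H) (P : Submodule ℂ H) :
    ∀ Γ : List Sentence, Γ ≠ [] → (P ≤ i.toFun (conjList Γ) ↔ ∀ γ ∈ Γ, P ≤ i.toFun γ)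
  | [], h => by simp at h
  | [a], _ => by simp [conjList]
  | a :: b :: l, _ => by
    have ih := le_conjList i P (b :: l) (by simp)
    simp only [conjList, i.map_conj, le_inf_iff, ih, List.mem_cons, forall_eq_or_imp]


lemma exists_indep {H : Type*} [NormedAddCommGroup H] [InnerProductSpace ℂ H]
    (hdim : 2 ≤ Module.rank ℂ H) :
    ∃ x y : H, x ≠ 0 ∧ y ∉ Submodule.span ℂ {x} := by
  have : Nontrivial H := by
    rw [← rank_pos_iff_nontrivial (R := ℂ)]
    exact lt_of_lt_of_le (by norm_num) hdim
  obtain ⟨x, hx⟩ := exists_ne (0 : H)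
  by_cases h : ∀ y : H, y ∈ Submodule.span ℂ {x}
  · exfalso
    have htop : Submodule.span ℂ {x} = ⊤ := by
      ext y; simp [h y]
    have h1 : Module.rank ℂ H ≤ 1 := by
      have := rank_span_le (R := ℂ) ({x} : Set H)
      rw [htop] at this
      simpa using this
    exact absurd (hdim.trans h1) (by norm_num)
  · push_neg at h
    obtain ⟨y, hy⟩ := h
    exact ⟨x, y, hx, hy⟩

lemma key_le {H : Type*} [NormedAddCommGroup H] [InnerProductSpace ℂ H] [CompleteSpace H]
    (hdim : 2 ≤ Module.rank ℂ H) (Q R : Submodule ℂ H) (hR : IsClosed (R : Set H))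
    (h : ∀ P : Submodule ℂ H, IsClosed (P : Set H) → P ≠ ⊥ → P ≠ ⊤ → R ≤ P → Q ≤ P) :
    Q ≤ R := by
  by_cases htop : R = ⊤
  · simp [htop]
  by_cases hbot : R = ⊥
  · obtain ⟨x, y, hx, hy⟩ := exists_indep hdim
    have hy0 : y ≠ 0 := fun h0 => hy (h0 ▸ Submodule.zero_mem _)
    have hxy : x ∉ Submodule.span ℂ {y} := by
      intro hmem
      rw [Submodule.mem_span_singleton] at hmem
      obtain ⟨c, hc⟩ := hmem
      have hc0 : c ≠ 0 := by rintro rfl; simp at hc; exact hx hc.symm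
      exact hy (Submodule.mem_span_singleton.mpr
        ⟨c⁻¹, by rw [← hc, smul_smul, inv_mul_cancel₀ hc0, one_smul]⟩)
    have hsx : Submodule.span ℂ ({x} : Set H) ≠ ⊤ := fun ht => hy (ht ▸ Submodule.mem_top)
    have hsy : Submodule.span ℂ ({y} : Set H) ≠ ⊤ := fun ht => hxy (ht ▸ Submodule.mem_top)
    have h1 := h (Submodule.span ℂ {x}) (Submodule.closed_of_finiteDimensional _)
      (by simpa [Submodule.span_singleton_eq_bot] using hx) hsx (hbot ▸ bot_le)
    have h2 := h (Submodule.span ℂ {y}) (Submodule.closed_of_finiteDimensional _)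
      (by simpa [Submodule.span_singleton_eq_bot] using hy0) hsy (hbot ▸ bot_le)
    intro z hz
    have hzx := Submodule.mem_span_singleton.mp (h1 hz)
    have hzy := Submodule.mem_span_singleton.mp (h2 hz)
    obtain ⟨c, rfl⟩ := hzx
    obtain ⟨d, hd⟩ := hzy
    rw [hbot]
    rcases eq_or_ne c 0 with rfl | hc0
    · simp
    · exfalso
      exact hxy (Submodule.mem_span_singleton.mpr
        ⟨c⁻¹ * d, by rw [mul_smul, hd, smul_smul, inv_mul_cancel₀ hc0, one_smul]⟩)
  · exact h R hR hbot htop le_rfl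

lemma qlconseq_iff {H : Type*} [NormedAddCommGroup H] [InnerProductSpace ℂ H] [CompleteSpace H]
    (Γ : List Sentence) (hΓ : Γ ≠ []) (a : Sentence) :
    QLconseq H {γ | γ ∈ Γ} a ↔ ∀ i : Interp H, i.toFun (conjList Γ) ≤ i.toFun a := by
  classical
  constructor
  · intro hq i z hz
    by_cases hz0 : z = 0
    · simp [hz0]
    set P := Submodule.span ℂ ({z} : Set H) with hPdef
    set v : SentVal := fun b => decide (P ≤ i.toFun b) with hvdef
    have hv : v ∈ CstarH H :=
      ⟨i, P, finrank_span_singleton hz0, fun b => by simp [hvdef]⟩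
    have hPle : P ≤ i.toFun (conjList Γ) := by
      rw [hPdef, Submodule.span_singleton_le_iff_mem]; exact hz
    have hprem : ∀ γ ∈ {γ | γ ∈ Γ}, v γ = true := by
      intro γ hγ
      simp only [hvdef, decide_eq_true_eq]
      exact hPle.trans ((le_conjList i _ Γ hΓ).mp le_rfl γ hγ)
    have := hq v hv hprem
    simp only [hvdef, decide_eq_true_eq] at this
    exact this (Submodule.mem_span_singleton_self z)
  · rintro hsem v ⟨i, P, hP1, hvP⟩ hprem
    rw [hvP]
    have hle : P ≤ i.toFun (conjList Γ) :=
      (le_conjList i P Γ hΓ).mpr fun γ hγ => (hvP γ).mp (hprem γ hγ)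
    exact hle.trans (hsem i)

lemma cvee_iff {H : Type*} [NormedAddCommGroup H] [InnerProductSpace ℂ H] [CompleteSpace H]
    (hdim : 2 ≤ Module.rank ℂ H) (Γ : List Sentence) (a : Sentence) :
    (∀ v ∈ Cvee H, v (conjList Γ) = true → v a = true) ↔
      ∀ i : Interp H, i.toFun (conjList Γ) ≤ i.toFun a := by
  classical
  constructor
  · intro h i
    refine key_le hdim _ _ (i.closed a) ?_
    intro P hPc hPb hPt hRa
    set v : SentVal := fun b => !decide (i.toFun b ≤ P) with hvdef
    have hv : v ∈ Cvee H := ⟨i, P, hPc, hPb, hPt, fun b => by simp [hvdef]⟩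
    by_cases hcase : i.toFun (conjList Γ) ≤ P
    · exact hcase
    · have := h v hv (by simp [hvdef, hcase])
      simp [hvdef, hRa] at this
  · rintro hsem v ⟨i, P, hPc, hPb, hPt, hvP⟩ hc
    by_contra hfa
    have hfa' : v a = false := by cases hva : v a <;> simp_all
    have h2 : i.toFun (conjList Γ) ≤ P := (hsem i).trans ((hvP a).mp hfa')
    have := (hvP (conjList Γ)).mpr h2
    simp [this] at hc


/-- for `dim H ≥ 2`, the class `𝓒^{(∨)}_H = {h_P ∘ i}` is an
`H`-klass. -/
theorem stmt_10 (H : Type*) [NormedAddCommGroup H] [InnerProductSpace ℂ H]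
    [CompleteSpace H] (hdim : 2 ≤ Module.rank ℂ H) :
    IsHKlass H (Cvee H) := by
  intro Γ hΓ a
  rw [qlconseq_iff Γ hΓ a, cvee_iff hdim Γ a]
end

section
/- Let H be a complex Hilbert space with dim H ≥ 2. For each connective c ∈ {∧, ∨, ¬}, there exists an H-klass of valuations that makes c truth-functional. In particular, there is an H-klass making conjunction TF (namely C*_H), an H-klass making disjunction TF, and an H-klass making negation TF (indeed one in which v(¬a) = t iff v(a) = f). -/
namespace Stmt13Aux


def code : Sentence → ℕ
  | .atom n => Nat.pair 0 n
  | .conj a b => Nat.pair 1 (Nat.pair (code a) (code b))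
  | .disj a b => Nat.pair 2 (Nat.pair (code a) (code b))
  | .neg a => Nat.pair 3 (code a)

theorem code_inj : ∀ x y : Sentence, code x = code y → x = y := by
  intro x
  induction x with
  | atom n => intro y h; cases y <;> simp [code, Nat.pair_eq_pair] at h <;> simp [h]
  | conj a b iha ihb =>
    intro y h; cases y <;> simp [code, Nat.pair_eq_pair] at h
    rw [iha _ h.1, ihb _ h.2]
  | disj a b iha ihb =>
    intro y h; cases y <;> simp [code, Nat.pair_eq_pair] at h
    rw [iha _ h.1, ihb _ h.2]
  | neg a iha =>
    intro y h; cases y <;> simp [code, Nat.pair_eq_pair] at h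
    rw [iha _ h]

instance : Countable Sentence := ⟨⟨code, fun _ _ => code_inj _ _⟩⟩
instance : Inhabited Sentence := ⟨.atom 0⟩



open Submodule

variable (H : Type*) [NormedAddCommGroup H] [InnerProductSpace ℂ H] [CompleteSpace H]

/-- The semantic preorder: `s ≤ t` in every interpretation. -/
def sle (s t : Sentence) : Prop := ∀ i : Interp H, i.toFun s ≤ i.toFun t

variable {H}

theorem interp_orth_orth (i : Interp H) (x : Sentence) : (i.toFun x)ᗮᗮ = i.toFun x := by
  haveI : CompleteSpace (i.toFun x) := (i.closed x).completeSpace_coe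
  exact Submodule.orthogonal_orthogonal _

theorem sle_refl (x : Sentence) : sle H x x := fun _ => le_rfl

theorem sle_trans {x y z : Sentence} (h1 : sle H x y) (h2 : sle H y z) : sle H x z :=
  fun i => (h1 i).trans (h2 i)

theorem sle_neg_neg {x y : Sentence} (h : sle H x y) : sle H y.neg x.neg := fun i => by
  rw [i.map_neg, i.map_neg]; exact Submodule.orthogonal_le (h i)

theorem sle_of_neg_neg {x y : Sentence} (h : sle H x.neg y.neg) : sle H y x := fun i => by
  have h' := Submodule.orthogonal_le (h i)
  rw [i.map_neg, i.map_neg, interp_orth_orth, interp_orth_orth] at h'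
  exact h'

theorem sle_negneg_self (x : Sentence) : sle H x.neg.neg x := fun i => by
  rw [i.map_neg, i.map_neg, interp_orth_orth]

theorem sle_self_negneg (x : Sentence) : sle H x x.neg.neg := fun i => by
  rw [i.map_neg, i.map_neg, interp_orth_orth]

/-- If `c ≤ x` and `c ≤ ¬x` then `c ≤ a` for every `a`. -/
theorem sle_all_of_le_both {c x : Sentence} (h1 : sle H c x) (h2 : sle H c x.neg)
    (a : Sentence) : sle H c a := fun i => by
  have h2' := h2 i; rw [i.map_neg] at h2'
  have hb : i.toFun c ≤ i.toFun x ⊓ (i.toFun x)ᗮ := le_inf (h1 i) h2'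
  rw [disjoint_iff.mp (Submodule.orthogonal_disjoint (i.toFun x))] at hb
  exact hb.trans bot_le

/-- If `¬x ≤ a` and `x ≤ a` then `c ≤ a` for every `c`. -/
theorem sle_all_of_both_le {a x : Sentence} (h1 : sle H x.neg a) (h2 : sle H x a)
    (c : Sentence) : sle H c a := fun i => by
  have h1' := h1 i; rw [i.map_neg] at h1'
  haveI : CompleteSpace (i.toFun x) := (i.closed x).completeSpace_coe
  have htop : i.toFun x ⊔ (i.toFun x)ᗮ = ⊤ := Submodule.sup_orthogonal_of_hasOrthogonalProjection
  refine le_trans le_top ?_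
  rw [← htop]
  exact sup_le (h2 i) h1'

theorem le_conjList (i : Interp H) (P : Submodule ℂ H) :
    ∀ Γ : List Sentence, Γ ≠ [] → (P ≤ i.toFun (conjList Γ) ↔ ∀ γ ∈ Γ, P ≤ i.toFun γ)
  | [], h => absurd rfl h
  | [a], _ => by simp [conjList]
  | a :: b :: l, _ => by
    rw [conjList, i.map_conj, le_inf_iff, le_conjList i P (b :: l) (by simp)]
    simp [List.forall_mem_cons, and_assoc]

open Classical in
noncomputable def vip (i : Interp H) (P : Submodule ℂ H) : SentVal :=
  fun x => decide (P ≤ i.toFun x)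

theorem vip_spec (i : Interp H) (P : Submodule ℂ H) (x : Sentence) :
    vip i P x = true ↔ P ≤ i.toFun x := by simp [vip]

theorem vip_mem (i : Interp H) {P : Submodule ℂ H} (hP : Module.finrank ℂ P = 1) :
    vip i P ∈ CstarH H := ⟨i, P, hP, fun x => vip_spec i P x⟩

theorem qlconseq_iff_sle (Γ : List Sentence) (hΓ : Γ ≠ []) (a : Sentence) :
    QLconseq H {γ | γ ∈ Γ} a ↔ sle H (conjList Γ) a := by
  constructor
  · intro hq i z hz
    by_cases hz0 : z = 0
    · subst hz0; exact (i.toFun a).zero_mem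
    · set P : Submodule ℂ H := Submodule.span ℂ {z} with hPdef
      have hP1 : Module.finrank ℂ P = 1 := finrank_span_singleton hz0
      have hPle : P ≤ i.toFun (conjList Γ) := by
        rw [hPdef, Submodule.span_le, Set.singleton_subset_iff]; exact hz
      have hva := hq (vip i P) (vip_mem i hP1) (fun γ hγ =>
        (vip_spec i P γ).mpr ((le_conjList i P Γ hΓ).mp hPle γ hγ))
      exact (vip_spec i P a).mp hva (Submodule.mem_span_singleton_self z)
  · rintro h v ⟨i, P, hP, hiff⟩ hprem
    have hPc : P ≤ i.toFun (conjList Γ) :=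
      (le_conjList i P Γ hΓ).mpr (fun γ hγ => (hiff γ).mp (hprem γ hγ))
    exact (hiff a).mpr (hPc.trans (h i))

theorem cstar_hklass : IsHKlass H (CstarH H) := by
  intro Γ hΓ a
  constructor
  · rintro hq v ⟨i, P, hP, hiff⟩ hc
    refine hq v ⟨i, P, hP, hiff⟩ (fun γ hγ => ?_)
    exact (hiff γ).mpr ((le_conjList i P Γ hΓ).mp ((hiff _).mp hc) γ hγ)
  · rintro h v ⟨i, P, hP, hiff⟩ hprem
    refine h v ⟨i, P, hP, hiff⟩ ?_
    exact (hiff _).mpr ((le_conjList i P Γ hΓ).mpr fun γ hγ => (hiff γ).mp (hprem γ hγ))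

theorem cstar_conj_tf : MakesBinTF (CstarH H) Sentence.conj := by
  refine ⟨fun x y => x && y, ?_⟩
  rintro v ⟨i, P, hP, hiff⟩ a b
  have h1 := hiff (Sentence.conj a b)
  rw [i.map_conj, le_inf_iff, ← hiff a, ← hiff b] at h1
  cases hab : v (Sentence.conj a b) <;> cases ha : v a <;> cases hb : v b <;> simp_all

theorem closure_sup_orth (A B : Submodule ℂ H) :
    ((A ⊔ B).topologicalClosure)ᗮ = Aᗮ ⊓ Bᗮ := by
  rw [← Submodule.orthogonal_orthogonal_eq_closure, Submodule.triorthogonal_eq_orthogonal,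
    ← Submodule.inf_orthogonal]



open Submodule

variable (H : Type*) [NormedAddCommGroup H] [InnerProductSpace ℂ H] [CompleteSpace H]

/-- The klass for disjunction: monotone, or-classical valuations. -/
def Kdisj : Set SentVal :=
  {v | (∀ x y, sle H x y → v x = true → v y = true) ∧
    ∀ a b, v (Sentence.disj a b) = (v a || v b)}

/-- The klass for negation: monotone, negation-classical valuations. -/
def Kneg : Set SentVal :=
  {v | (∀ x y, sle H x y → v x = true → v y = true) ∧
    ∀ x, v (Sentence.neg x) = !(v x)}

variable {H}

theorem kdisj_separation {c a : Sentence} (hca : ¬ sle H c a) :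
    ∃ v ∈ Kdisj H, v c = true ∧ v a = false := by
  classical
  rw [sle, not_forall] at hca
  obtain ⟨i, hi⟩ := hca
  have h2 : ¬ ((i.toFun a)ᗮ ≤ (i.toFun c)ᗮ) := fun hle => hi (by
    have h3 := Submodule.orthogonal_le hle
    rwa [interp_orth_orth, interp_orth_orth] at h3)
  obtain ⟨z, hza, hzc⟩ := SetLike.not_le_iff_exists.mp h2
  refine ⟨fun x => decide (z ∉ (i.toFun x)ᗮ), ⟨?_, ?_⟩, ?_, ?_⟩
  · intro x y hxy hx
    simp only [decide_eq_true_eq] at hx ⊢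
    exact fun hmem => hx (Submodule.orthogonal_le (hxy i) hmem)
  · intro p q
    have hpq : z ∈ (i.toFun (Sentence.disj p q))ᗮ ↔
        z ∈ (i.toFun p)ᗮ ∧ z ∈ (i.toFun q)ᗮ := by
      rw [i.map_disj, closure_sup_orth, Submodule.mem_inf]
    by_cases h1 : z ∈ (i.toFun p)ᗮ <;> by_cases hq : z ∈ (i.toFun q)ᗮ <;>
      simp [hpq, h1, hq]
  · simp [hzc]
  · simp [hza]

theorem kdisj_hklass : IsHKlass H (Kdisj H) := by
  intro Γ hΓ a
  rw [qlconseq_iff_sle Γ hΓ a]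
  constructor
  · intro h v hv hc; exact hv.1 _ _ h hc
  · intro h
    by_contra hca
    obtain ⟨v, hv, hc, ha⟩ := kdisj_separation hca
    rw [h v hv hc] at ha
    exact absurd ha (by simp)

/-! ### The greedy construction of a monotone negation-classical valuation -/

variable (H)

open Classical in
/-- Stages of the construction: a growing pair (up-set, down-set). -/
noncomputable def stage (c a : Sentence) (e : ℕ → Sentence) :
    ℕ → Set Sentence × Set Sentence
  | 0 => ({x | sle H c x ∨ sle H (Sentence.neg x) a},
          {x | sle H x a ∨ sle H c (Sentence.neg x)})
  | n + 1 =>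
    let p := stage c a e n
    if e n ∈ p.1 ∨ e n ∈ p.2 then p
    else (p.1 ∪ {x | sle H (e n) x}, p.2 ∪ {x | sle H x (Sentence.neg (e n))})

/-- Invariants of a stage. -/
structure Good (a : Sentence) (p : Set Sentence × Set Sentence) : Prop where
  disj : ∀ x, x ∈ p.1 → x ∈ p.2 → False
  up : ∀ x y, x ∈ p.1 → sle H x y → y ∈ p.1
  down : ∀ x y, y ∈ p.2 → sle H x y → x ∈ p.2
  dual : ∀ x, x ∈ p.1 ↔ Sentence.neg x ∈ p.2
  lowa : ∀ x, sle H x a → x ∈ p.2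

variable {H}

/-- From `¬x ∈ p.1` conclude `x ∈ p.2`. -/
theorem Good.neg_mem {a : Sentence} {p : Set Sentence × Set Sentence}
    (hg : Good H a p) {x : Sentence} (h : Sentence.neg x ∈ p.1) : x ∈ p.2 :=
  hg.down x _ ((hg.dual (Sentence.neg x)).mp h) (sle_self_negneg x)

/-- From `x ∈ p.2` conclude `¬x ∈ p.1`. -/
theorem Good.mem_neg {a : Sentence} {p : Set Sentence × Set Sentence}
    (hg : Good H a p) {x : Sentence} (h : x ∈ p.2) : Sentence.neg x ∈ p.1 :=
  (hg.dual (Sentence.neg x)).mpr (hg.down _ x h (sle_negneg_self x))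

theorem good_zero {c a : Sentence} (hca : ¬ sle H c a) (e : ℕ → Sentence) :
    Good H a (stage H c a e 0) := by
  constructor
  · rintro x (h1 | h1) (h2 | h2)
    · exact hca (sle_trans h1 h2)
    · exact hca (sle_all_of_le_both h1 h2 a)
    · exact hca (sle_all_of_both_le h1 h2 c)
    · exact hca (sle_trans h2 h1)
  · rintro x y (h1 | h1) hxy
    · exact Or.inl (sle_trans h1 hxy)
    · exact Or.inr (sle_trans (sle_neg_neg hxy) h1)
  · rintro x y (h1 | h1) hxy
    · exact Or.inl (sle_trans hxy h1)
    · exact Or.inr (sle_trans h1 (sle_neg_neg hxy))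
  · intro x
    constructor
    · rintro (h | h)
      · exact Or.inr (sle_trans h (sle_self_negneg x))
      · exact Or.inl h
    · rintro (h | h)
      · exact Or.inr h
      · exact Or.inl (sle_trans h (sle_negneg_self x))
  · intro x h; exact Or.inl h

theorem good_succ {c a : Sentence} (e : ℕ → Sentence) (n : ℕ)
    (hg : Good H a (stage H c a e n)) : Good H a (stage H c a e (n + 1)) := by
  classical
  set p := stage H c a e n with hp
  by_cases hdec : e n ∈ p.1 ∨ e n ∈ p.2
  · have : stage H c a e (n + 1) = p := by rw [stage, ← hp]; simp [hdec]
    rwa [this]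
  · push_neg at hdec
    have hstage : stage H c a e (n + 1) =
        (p.1 ∪ {x | sle H (e n) x}, p.2 ∪ {x | sle H x (Sentence.neg (e n))}) := by
      rw [stage, ← hp]; simp [hdec.1, hdec.2]
    rw [hstage]
    constructor
    · rintro x (h1 | h1) (h2 | h2)
      · exact hg.disj x h1 h2
      · exact hdec.2 (hg.neg_mem (hg.up x _ h1 h2))
      · exact hdec.2 (hg.down _ x h2 h1)
      · exact hdec.2 (hg.lowa _ (sle_all_of_le_both (sle_refl (e n)) (sle_trans h1 h2) a))
    · rintro x y (h1 | h1) hxy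
      · exact Or.inl (hg.up x y h1 hxy)
      · exact Or.inr (sle_trans h1 hxy)
    · rintro x y (h1 | h1) hxy
      · exact Or.inl (hg.down x y h1 hxy)
      · exact Or.inr (sle_trans hxy h1)
    · intro x
      constructor
      · rintro (h | h)
        · exact Or.inl ((hg.dual x).mp h)
        · exact Or.inr (sle_neg_neg h)
      · rintro (h | h)
        · exact Or.inl ((hg.dual x).mpr h)
        · exact Or.inr (sle_of_neg_neg h)
    · intro x h; exact Or.inl (hg.lowa x h)

theorem good_all {c a : Sentence} (hca : ¬ sle H c a) (e : ℕ → Sentence) (n : ℕ) :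
    Good H a (stage H c a e n) := by
  induction n with
  | zero => exact good_zero hca e
  | succ n ih => exact good_succ e n ih

theorem stage_mono {c a : Sentence} (e : ℕ → Sentence) {m n : ℕ} (h : m ≤ n) :
    (stage H c a e m).1 ⊆ (stage H c a e n).1 ∧ (stage H c a e m).2 ⊆ (stage H c a e n).2 := by
  classical
  induction n, h using Nat.le_induction with
  | base => exact ⟨subset_rfl, subset_rfl⟩
  | succ n _ ih =>
    refine ⟨ih.1.trans ?_, ih.2.trans ?_⟩ <;>
    · rw [stage]
      split <;> simp [Set.subset_union_left]

theorem stage_total {c a : Sentence} (e : ℕ → Sentence) (he : Function.Surjective e)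
    (x : Sentence) : ∃ n, x ∈ (stage H c a e n).1 ∨ x ∈ (stage H c a e n).2 := by
  classical
  obtain ⟨m, rfl⟩ := he x
  refine ⟨m + 1, ?_⟩
  rw [stage]
  split
  · assumption
  · exact Or.inl (Or.inr (sle_refl (e m)))

theorem kneg_separation {c a : Sentence} (hca : ¬ sle H c a) :
    ∃ v ∈ Kneg H, v c = true ∧ v a = false := by
  classical
  obtain ⟨e, he⟩ := exists_surjective_nat Sentence
  have hg := good_all hca e
  set U : Set Sentence := {x | ∃ n, x ∈ (stage H c a e n).1} with hU
  have hUD : ∀ x, x ∈ U → (∃ n, x ∈ (stage H c a e n).2) → False := by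
    rintro x ⟨m, hm⟩ ⟨n, hn⟩
    exact (hg (max m n)).disj x ((stage_mono e (le_max_left m n)).1 hm)
      ((stage_mono e (le_max_right m n)).2 hn)
  have hnegU : ∀ x, Sentence.neg x ∈ U ↔ x ∉ U := by
    intro x
    constructor
    · rintro ⟨n, hn⟩ hx
      exact hUD x hx ⟨n, (hg n).neg_mem hn⟩
    · intro hx
      obtain ⟨n, hn | hn⟩ := stage_total (H := H) (c := c) (a := a) e he x
      · exact absurd ⟨n, hn⟩ hx
      · exact ⟨n, (hg n).mem_neg hn⟩
  refine ⟨fun x => decide (x ∈ U), ⟨?_, ?_⟩, ?_, ?_⟩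
  · intro x y hxy hx
    simp only [decide_eq_true_eq] at hx ⊢
    obtain ⟨n, hn⟩ := hx
    exact ⟨n, (hg n).up x y hn hxy⟩
  · intro x
    by_cases hx : x ∈ U
    · have : Sentence.neg x ∉ U := fun h => (hnegU x).mp h hx
      simp [hx, this]
    · have : Sentence.neg x ∈ U := (hnegU x).mpr hx
      simp [hx, this]
  · simp only [decide_eq_true_eq]
    exact ⟨0, Or.inl (sle_refl c)⟩
  · simp only [decide_eq_false_iff_not]
    intro ha
    exact hUD a ha ⟨0, (hg 0).lowa a (sle_refl a)⟩

theorem kneg_hklass : IsHKlass H (Kneg H) := by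
  intro Γ hΓ a
  rw [qlconseq_iff_sle Γ hΓ a]
  constructor
  · intro h v hv hc; exact hv.1 _ _ h hc
  · intro h
    by_contra hca
    obtain ⟨v, hv, hc, ha⟩ := kneg_separation hca
    rw [h v hv hc] at ha
    exact absurd ha (by simp)


end Stmt13Aux

/-- for `dim H ≥ 2` and each connective `c ∈ {∧, ∨, ¬}`, there
is an `H`-klass making `c` truth-functional: `C*_H` makes `∧` TF, some `H`-klass
makes `∨` TF, and some `H`-klass makes `¬` TF (indeed classically so). -/
theorem stmt_13 (H : Type*) [NormedAddCommGroup H] [InnerProductSpace ℂ H]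
    [CompleteSpace H] (hdim : 2 ≤ Module.rank ℂ H) :
    (IsHKlass H (CstarH H) ∧ MakesBinTF (CstarH H) Sentence.conj) ∧
    (∃ K : Set SentVal, IsHKlass H K ∧ MakesBinTF K Sentence.disj) ∧
    (∃ K : Set SentVal, IsHKlass H K ∧ MakesNegTF K ∧
      ∀ v ∈ K, ∀ a : Sentence, (v (Sentence.neg a) = true ↔ v a = false)) := by
  refine ⟨⟨Stmt13Aux.cstar_hklass, Stmt13Aux.cstar_conj_tf⟩,
    ⟨Stmt13Aux.Kdisj H, Stmt13Aux.kdisj_hklass, ⟨fun x y => x || y, ?_⟩⟩,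
    ⟨Stmt13Aux.Kneg H, Stmt13Aux.kneg_hklass, ⟨fun x => !x, ?_⟩, ?_⟩⟩
  · intro v hv a b; exact hv.2 a b
  · intro v hv a; exact hv.2 a
  · intro v hv a; rw [hv.2 a]; cases v a <;> simp
end

section
/- Every CL-class of valuations makes conjunction truth-functional according to the classical truth table: if 𝓒 is a CL-class, then every v ∈ 𝓒 satisfies v(a∧b) = t iff v(a) = v(b) = t, for all a, b ∈ S. Hence there is no CL-class that makes conjunction non-truth-functional. -/
/-- every CL-class makes conjunction truth-functional according
to the classical truth table; hence no CL-class makes conjunction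
non-truth-functional. -/
theorem stmt_17 :
    (∀ C : Set SentVal, IsCLClass C →
      ∀ v ∈ C, ∀ a b, (v (Sentence.conj a b) = true ↔ (v a = true ∧ v b = true))) ∧
    ¬ ∃ C : Set SentVal, IsCLClass C ∧ ¬ MakesBinTF C Sentence.conj := by

  have main : ∀ C : Set SentVal, IsCLClass C →
      ∀ v ∈ C, ∀ a b, (v (Sentence.conj a b) = true ↔ (v a = true ∧ v b = true)) := by
    intro C hC v hv a b
    constructor
    · intro h
      constructor
      · have h1 : CLconseq {Sentence.conj a b} a := by
          intro w hw hΓ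
          exact ((hw.1 a b).mp (hΓ _ rfl)).1
        exact (hC _ _).mp h1 v hv (fun γ hγ => by cases hγ; exact h)
      · have h1 : CLconseq {Sentence.conj a b} b := by
          intro w hw hΓ
          exact ((hw.1 a b).mp (hΓ _ rfl)).2
        exact (hC _ _).mp h1 v hv (fun γ hγ => by cases hγ; exact h)
    · rintro ⟨ha, hb⟩
      have h1 : CLconseq {a, b} (Sentence.conj a b) := by
        intro w hw hΓ
        exact (hw.1 a b).mpr ⟨hΓ a (Or.inl rfl), hΓ b (Or.inr rfl)⟩
      refine (hC _ _).mp h1 v hv ?_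
      rintro γ (rfl | rfl)
      · exact ha
      · exact hb
  refine ⟨main, ?_⟩
  rintro ⟨C, hC, hnot⟩
  apply hnot
  refine ⟨fun x y => x && y, fun v hv a b => ?_⟩
  have := main C hC v hv a b
  cases hva : v a <;> cases hvb : v b <;> simp_all
end
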